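/- arXiv:1305.4557 — 5 statements merged into one kernel-verified Lean document; each statement's English description precedes it below -/
import Mathlib

section
/- Let G be a graph, k a positive integer, and let (A,B) be a T-shaped k-separation of G. Then |A| ≤ (3/2)k. -/
variable {V : Type*}

/-- `S` separates `u` from `v` in `G`: neither lies in `S` and every walk meets `S`. -/
def SepBy (G : SimpleGraph V) (S : Set V) (u v : V) : Prop :=
  u ∉ S ∧ v ∉ S ∧ ∀ p : G.Walk u v, ∃ w ∈ p.support, w ∈ S

/-- `X` is (≤k)-inseparable: no set of at most `k` vertices separates two of its vertices. -/
def Insep (G : SimpleGraph V) (k : ℕ) (X : Set V) : Prop :=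
  ∀ S : Finset V, S.card ≤ k → ∀ u ∈ X, ∀ v ∈ X, ¬ SepBy G (S : Set V) u v

/-- A `k`-block: a maximal (≤(k-1))-inseparable set of at least `k` vertices. -/
def IsBlockN (G : SimpleGraph V) (k : ℕ) (B : Set V) : Prop :=
  k ≤ B.ncard ∧ Insep G (k - 1) B ∧
    ∀ B' : Set V, B ⊆ B' → Insep G (k - 1) B' → B' = B

/-- `(A,B)` is a separation of `G`. -/
def IsSepn (G : SimpleGraph V) (A B : Set V) : Prop :=
  A ∪ B = Set.univ ∧ ∀ a ∈ A \ B, ∀ b ∈ B \ A, ¬ G.Adj a b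

/-- A separation is proper if neither side contains the other. -/
def ProperSep (A B : Set V) : Prop := ¬ A ⊆ B ∧ ¬ B ⊆ A

/-- `G` is `k`-connected. -/
def KConn (G : SimpleGraph V) [Fintype V] (k : ℕ) : Prop :=
  k < Fintype.card V ∧ ∀ S : Finset V, S.card < k → ∀ u v : V, ¬ SepBy G (S : Set V) u v

/-- `(A,B)` is a T-shaped `k`-separation of `G`. -/
def TShaped (G : SimpleGraph V) (k : ℕ) (A B : Set V) : Prop :=
  IsSepn G A B ∧ ProperSep A B ∧ (A ∩ B).ncard = k ∧
    ∃ C D : Set V, IsSepn G C D ∧ ProperSep C D ∧ (C ∩ D).ncard = k ∧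
      A \ B ⊆ C ∩ D ∧ (A ∩ C).ncard ≤ k ∧ (A ∩ D).ncard ≤ k

/-! Since `C ∪ D` covers `A` and `A ∖ B ⊆ C ∩ D`, inclusion–exclusion gives
`|A| + |A ∖ B| ≤ |A ∩ C| + |A ∩ D| ≤ 2k`, while `|A| = k + |A ∖ B|`. -/

theorem Set.ncard_add_ncard_diff_le_of_union_eq_univ {A B C D : Set V} (hA : A.Finite)
    (hCD : C ∪ D = Set.univ) (hsub : A \ B ⊆ C ∩ D) :
    A.ncard + (A \ B).ncard ≤ (A ∩ C).ncard + (A ∩ D).ncard := by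
  have hcover : (A ∩ C) ∪ (A ∩ D) = A := by
    rw [← Set.inter_union_distrib_left, hCD, Set.inter_univ]
  have hdiff : A \ B ⊆ (A ∩ C) ∩ (A ∩ D) := fun x hx =>
    ⟨⟨hx.1, (hsub hx).1⟩, hx.1, (hsub hx).2⟩
  calc A.ncard + (A \ B).ncard
      ≤ ((A ∩ C) ∪ (A ∩ D)).ncard + ((A ∩ C) ∩ (A ∩ D)).ncard := by
        rw [hcover]
        exact Nat.add_le_add_left (Set.ncard_le_ncard hdiff ((hA.inter_of_left C).inter_of_left _)) _
    _ = (A ∩ C).ncard + (A ∩ D).ncard :=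
        Set.ncard_union_add_ncard_inter _ _ (hA.inter_of_left C) (hA.inter_of_left D)

theorem stmt3_general (G : SimpleGraph V) (k : ℕ) (A B : Set V)
    (h : TShaped G k A B) : 2 * A.ncard ≤ 3 * k := by
  obtain ⟨-, -, hAB, C, D, ⟨hCD, -⟩, -, -, hsub, hC, hD⟩ := h
  rcases A.finite_or_infinite with hA | hA
  · have hcount := Set.ncard_add_ncard_diff_le_of_union_eq_univ hA hCD hsub
    have hsplit := Set.ncard_inter_add_ncard_sdiff_eq_ncard A B hA
    omega
  · simp [hA.ncard]

theorem stmt3 [Fintype V] (G : SimpleGraph V) (k : ℕ) (hk : 0 < k) (A B : Set V)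
    (h : TShaped G k A B) : 2 * A.ncard ≤ 3 * k :=
  stmt3_general G k A B h
end

section
/- Let G be a k-connected graph. Then the following are equivalent: (i) every proper k-separation of G separates two (k+1)-blocks (i.e., for every proper k-separation (A,B) there exist (k+1)-blocks X ⊆ A and Y ⊆ B with X ⊄ A∩B and Y ⊄ A∩B separated by (A,B)); (ii) no k-separation of G is T-shaped. -/
variable {V : Type*}

/-!
A `(k+1)`-block is `k`-inseparable, so it lies on one side of every `k`-separation; if `(A,B)` is
T-shaped via `(C,D)`, a block inside `A` would lie in `A ∩ C` or `A ∩ D`, both of size at most `k`.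

Conversely, call a proper `k`-separation `(A,B)` blockless if `A` contains no `k`-inseparable set
of more than `k` vertices; by maximality of blocks this holds as soon as every `(k+1)`-block inside
`A` lies in `A ∩ B`. Take a blockless `(A,B)` with `|A|` minimal. As `|A| > k`, two vertices
`u, v ∈ A` are separated by a proper `k`-separation `(C,D)`. If the corner `A ∩ C` had order
`> k`, by submodularity the opposite corner `B ∩ D` would have order `< k`, so by `k`-connectivity
`D ∖ C ⊆ A`; then `(D,C)` would be blockless with `|D| < |A|`. So the corners at `A` have order at
most `k`. A vertex of `A ∖ B` outside `D` would then make the corner `(A ∩ C, B ∪ D)` blockless with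
a smaller first side. Hence `A ∖ B ⊆ C ∩ D`, the corner `A ∩ C` is all of `A ∩ C`, and
`|A ∩ C|, |A ∩ D| ≤ k`: `(A,B)` is T-shaped.
-/

open Set

section Separations

variable {G : SimpleGraph V} {k : ℕ} {A B C D X : Set V} {u v : V}

lemma IsSepn.symm (h : IsSepn G A B) : IsSepn G B A :=
  ⟨union_comm A B ▸ h.1, fun b hb a ha hab => h.2 a ha b hb hab.symm⟩

lemma IsSepn.mem_or_mem (h : IsSepn G A B) (x : V) : x ∈ A ∨ x ∈ B := by
  simp [← mem_union, h.1]

lemma ProperSep.symm (h : ProperSep A B) : ProperSep B A := ⟨h.2, h.1⟩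

lemma ProperSep.of_mem (hu : u ∈ A \ B) (hv : v ∈ B \ A) : ProperSep A B :=
  ⟨fun h => hu.2 (h hu.1), fun h => hv.2 (h hv.1)⟩

lemma IsSepn.sepBy (h : IsSepn G A B) (hu : u ∈ A \ B) (hv : v ∈ B \ A) :
    SepBy G (A ∩ B) u v := by
  refine ⟨fun h' => hu.2 h'.2, fun h' => hv.2 h'.1, fun p => ?_⟩
  obtain ⟨d, hd, hfst, hsnd⟩ := p.exists_boundary_dart (A \ B) hu fun h' => hv.2 h'.1
  refine ⟨d.snd, p.dart_snd_mem_support_of_mem_darts hd, ?_⟩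
  by_contra hnot
  rcases h.mem_or_mem d.snd with hA | hB
  · exact hsnd ⟨hA, fun hB => hnot ⟨hA, hB⟩⟩
  · exact h.2 _ hfst _ ⟨hB, fun hA => hnot ⟨hA, hB⟩⟩ d.adj

/-- The vertices reachable from `u` outside `T`, together with `T`, form one side. -/
lemma SepBy.exists_isSepn {T : Set V} (h : SepBy G T u v) :
    ∃ C D : Set V, IsSepn G C D ∧ C ∩ D = T ∧ u ∈ C \ D ∧ v ∈ D \ C := by
  set R : Set V := {x | ∃ p : G.Walk u x, ∀ w ∈ p.support, w ∉ T}
  have hRT : Disjoint R T := disjoint_left.2 fun x ⟨p, hp⟩ => hp x p.end_mem_support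
  have huR : u ∈ R := ⟨.nil, by simpa using h.1⟩
  have hvR : v ∉ R := fun ⟨p, hp⟩ => by
    obtain ⟨w, hw, hwT⟩ := h.2.2 p
    exact hp w hw hwT
  refine ⟨R ∪ T, Rᶜ, ⟨?_, ?_⟩, ?_, ⟨.inl huR, by simpa using huR⟩, hvR, ?_⟩
  · rw [union_assoc, union_comm, union_assoc, compl_union_self, union_univ]
  · rintro x ⟨-, hx⟩ y ⟨hy, hyT⟩ hxy
    obtain ⟨p, hp⟩ : x ∈ R := by simpa using hx
    refine hy ⟨p.concat hxy, fun w hw => ?_⟩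
    rcases List.mem_append.1 (p.support_concat hxy ▸ hw) with hw | hw
    · exact hp w hw
    · exact (List.mem_singleton.1 hw) ▸ fun hyT' => hyT (.inr hyT')
  · rw [union_inter_distrib_right, inter_compl_self, empty_union,
      inter_eq_left.2 (subset_compl_iff_disjoint_left.2 hRT)]
  · exact fun hv => hv.elim hvR h.2.1

lemma IsSepn.inter_union (h₁ : IsSepn G A B) (h₂ : IsSepn G C D) :
    IsSepn G (A ∩ C) (B ∪ D) := by
  refine ⟨eq_univ_of_forall fun x => ?_, ?_⟩
  · rcases h₁.mem_or_mem x with hA | hB <;> rcases h₂.mem_or_mem x with hC | hD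
    all_goals first
      | exact .inl ⟨‹_›, ‹_›⟩
      | exact .inr (.inl ‹_›)
      | exact .inr (.inr ‹_›)
  · rintro x ⟨⟨hxA, hxC⟩, hxBD⟩ y ⟨hyBD, hyAC⟩ hxy
    simp only [mem_union, not_or] at hxBD
    by_cases hyA : y ∈ A
    · have hyD : y ∈ D := (h₂.mem_or_mem y).resolve_left fun hyC => hyAC ⟨hyA, hyC⟩
      exact h₂.2 x ⟨hxC, hxBD.2⟩ y ⟨hyD, fun hyC => hyAC ⟨hyA, hyC⟩⟩ hxy
    · exact h₁.2 x ⟨hxA, hxBD.1⟩ y ⟨(h₁.mem_or_mem y).resolve_left hyA, hyA⟩ hxy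

/-- Submodularity of the order of separations. -/
lemma ncard_corner_add_ncard_corner_le [Finite V] (A B C D : Set V) :
    (A ∩ C ∩ (B ∪ D)).ncard + (B ∩ D ∩ (A ∪ C)).ncard ≤ (A ∩ B).ncard + (C ∩ D).ncard := by
  rw [← ncard_union_add_ncard_inter, ← ncard_union_add_ncard_inter (A ∩ B)]
  gcongr ?_ + ?_
  · refine ncard_le_ncard ?_
    rintro x (⟨⟨hA, hC⟩, hB | hD⟩ | ⟨⟨hB, hD⟩, hA | hC⟩)
    exacts [.inl ⟨hA, hB⟩, .inr ⟨hC, hD⟩, .inl ⟨hA, hB⟩, .inr ⟨hC, hD⟩]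
  · refine ncard_le_ncard ?_
    rintro x ⟨⟨⟨hA, hC⟩, -⟩, ⟨hB, hD⟩, -⟩
    exact ⟨⟨hA, hB⟩, hC, hD⟩

lemma Insep.subset_or_subset [Finite V] (hX : Insep G k X) (h : IsSepn G A B)
    (hk : (A ∩ B).ncard ≤ k) : X ⊆ A ∨ X ⊆ B := by
  by_contra! hXAB
  obtain ⟨x, hxX, hxA⟩ := not_subset.1 hXAB.1
  obtain ⟨y, hyX, hyB⟩ := not_subset.1 hXAB.2
  have hxB := (h.mem_or_mem x).resolve_left hxA
  have hyA := (h.mem_or_mem y).resolve_right hyB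
  refine hX (toFinite (A ∩ B)).toFinset ?_ y hyX x hxX ?_
  · rwa [← ncard_eq_toFinset_card _]
  · rw [Finite.coe_toFinset]
    exact h.sepBy ⟨hyA, hyB⟩ ⟨hxB, hxA⟩

lemma IsBlockN.insep (hX : IsBlockN G (k + 1) X) : Insep G k X := hX.2.1

lemma Insep.exists_isBlockN [Finite V] (hX : Insep G k X) (hk : k + 1 ≤ X.ncard) :
    ∃ Y, X ⊆ Y ∧ IsBlockN G (k + 1) Y := by
  obtain ⟨Y, hXY, hY⟩ := Finite.exists_le_maximal hX
  exact ⟨Y, hXY, hk.trans (ncard_le_ncard hXY), hY.prop,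
    fun Z hYZ hZ => (hY.eq_of_subset hZ hYZ).symm⟩

lemma KConn.le_ncard_inter [Fintype V] (hG : KConn G k) (h : IsSepn G A B) (hu : u ∈ A \ B)
    (hv : v ∈ B \ A) : k ≤ (A ∩ B).ncard := by
  by_contra! hlt
  refine hG.2 (toFinite (A ∩ B)).toFinset ?_ u v ?_
  · rwa [← ncard_eq_toFinset_card _]
  · rw [Finite.coe_toFinset]
    exact h.sepBy hu hv

end Separations

structure IsBlocklessSep (G : SimpleGraph V) (k : ℕ) (A B : Set V) : Prop where
  isSepn : IsSepn G A B
  proper : ProperSep A B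
  ncard_inter : (A ∩ B).ncard = k
  ncard_le_of_insep : ∀ X ⊆ A, Insep G k X → X.ncard ≤ k

section Blockless

variable {G : SimpleGraph V} {k : ℕ} {A B C D : Set V} {u v : V}

lemma isBlocklessSep_of_forall_isBlockN [Finite V] (hsep : IsSepn G A B) (hprop : ProperSep A B)
    (hk : (A ∩ B).ncard = k) (hblock : ∀ X, IsBlockN G (k + 1) X → X ⊆ A → X ⊆ A ∩ B) :
    IsBlocklessSep G k A B := by
  refine ⟨hsep, hprop, hk, fun X hXA hX => ?_⟩
  by_contra! hXk
  obtain ⟨Y, hXY, hY⟩ := hX.exists_isBlockN hXk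
  have hXAB : X ⊆ A ∩ B := by
    rcases hY.insep.subset_or_subset hsep hk.le with hYA | hYB
    · exact hXY.trans (hblock Y hY hYA)
    · exact subset_inter hXA (hXY.trans hYB)
  exact (hk ▸ ncard_le_ncard hXAB).not_gt hXk

lemma IsBlocklessSep.of_ncard_inter_le [Finite V] (hAB : IsBlocklessSep G k A B)
    (hCD : IsSepn G C D) (hprop : ProperSep C D) (hk : (C ∩ D).ncard = k)
    (hBC : (B ∩ C).ncard ≤ k) : IsBlocklessSep G k C D := by
  refine ⟨hCD, hprop, hk, fun X hXC hX => ?_⟩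
  rcases hX.subset_or_subset hAB.isSepn hAB.ncard_inter.le with hXA | hXB
  · exact hAB.ncard_le_of_insep X hXA hX
  · exact (ncard_le_ncard (subset_inter hXB hXC)).trans hBC

variable [Fintype V]

lemma IsBlocklessSep.ncard_corner_le (hG : KConn G k) (hAB : IsBlocklessSep G k A B)
    (hmin : ∀ P Q, IsBlocklessSep G k P Q → A.ncard ≤ P.ncard) (hCD : IsSepn G C D)
    (hk : (C ∩ D).ncard = k) (hu : u ∈ C \ D) (huA : u ∈ A) (hv : v ∈ D \ C) :
    (A ∩ C ∩ (B ∪ D)).ncard ≤ k := by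
  by_contra! hbig
  have hsubmod := ncard_corner_add_ncard_corner_le A B C D
  rw [hAB.ncard_inter, hk] at hsubmod
  have hBD : B ∩ D ⊆ A ∪ C := fun x hx => by
    by_contra hx'
    have := hG.le_ncard_inter (hAB.isSepn.symm.inter_union hCD.symm) ⟨hx, hx'⟩
      ⟨.inl huA, fun h => hu.2 h.2⟩
    omega
  have hDC : IsBlocklessSep G k D C := by
    refine hAB.of_ncard_inter_le hCD.symm (.of_mem hv hu) (by rwa [inter_comm]) ?_
    rw [inter_eq_left.2 hBD] at hsubmod
    omega
  have hDA : D \ C ⊆ A \ C := fun x hx => by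
    refine ⟨?_, hx.2⟩
    by_contra hxA
    exact (hBD ⟨(hAB.isSepn.mem_or_mem x).resolve_left hxA, hx.1⟩).elim hxA hx.2
  have hAC : (A ∩ C).ncard ≤ k := by
    have hAD := hmin D C hDC
    have := ncard_le_ncard hDA
    have := ncard_inter_add_ncard_sdiff_eq_ncard A C
    have := ncard_inter_add_ncard_sdiff_eq_ncard D C
    rw [inter_comm D C, hk] at this
    omega
  exact hbig.not_ge ((ncard_le_ncard inter_subset_left).trans hAC)

lemma IsBlocklessSep.sdiff_subset (hG : KConn G k) (hAB : IsBlocklessSep G k A B)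
    (hmin : ∀ P Q, IsBlocklessSep G k P Q → A.ncard ≤ P.ncard) (hCD : IsSepn G C D)
    (hk : (C ∩ D).ncard = k) (hu : u ∈ C \ D) (huA : u ∈ A) (hv : v ∈ D \ C) (hvA : v ∈ A) :
    A \ B ⊆ D := fun a ha => by
  by_contra haD
  have haC := (hCD.mem_or_mem a).resolve_right haD
  have hcorner := hAB.isSepn.inter_union hCD
  have haAC : a ∈ (A ∩ C) \ (B ∪ D) := ⟨⟨ha.1, haC⟩, by simp [ha.2, haD]⟩
  have hvAC : v ∈ (B ∪ D) \ (A ∩ C) := ⟨.inr hv.1, fun h => hv.2 h.2⟩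
  have hk' : (A ∩ C ∩ (B ∪ D)).ncard = k :=
    (hAB.ncard_corner_le hG hmin hCD hk hu huA hv).antisymm (hG.le_ncard_inter hcorner haAC hvAC)
  have hACsep : IsBlocklessSep G k (A ∩ C) (B ∪ D) :=
    hAB.of_ncard_inter_le hcorner (.of_mem haAC hvAC) hk'
      (hAB.ncard_inter ▸ ncard_le_ncard fun x hx => ⟨hx.2.1, hx.1⟩)
  exact hvAC.2 ((eq_of_subset_of_ncard_le inter_subset_left (hmin _ _ hACsep)).symm ▸ hvA)

lemma IsBlocklessSep.ncard_inter_le (hG : KConn G k) (hAB : IsBlocklessSep G k A B)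
    (hmin : ∀ P Q, IsBlocklessSep G k P Q → A.ncard ≤ P.ncard) (hCD : IsSepn G C D)
    (hk : (C ∩ D).ncard = k) (hu : u ∈ C \ D) (huA : u ∈ A) (hv : v ∈ D \ C) (hvA : v ∈ A) :
    (A ∩ C).ncard ≤ k := by
  have hD := hAB.sdiff_subset hG hmin hCD hk hu huA hv hvA
  have hAC : A ∩ C ⊆ B ∪ D := fun x hx => by
    by_cases hxB : x ∈ B
    exacts [.inl hxB, .inr (hD ⟨hx.1, hxB⟩)]
  simpa [inter_eq_left.2 hAC] using hAB.ncard_corner_le hG hmin hCD hk hu huA hv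

lemma IsBlocklessSep.tShaped (hG : KConn G k) (hAB : IsBlocklessSep G k A B)
    (hmin : ∀ P Q, IsBlocklessSep G k P Q → A.ncard ≤ P.ncard) : TShaped G k A B := by
  have hA : ¬ Insep G k A := fun hA => by
    obtain ⟨a, ha⟩ := sdiff_nonempty.2 hAB.proper.1
    have := hAB.ncard_le_of_insep A subset_rfl hA
    have := ncard_inter_add_ncard_sdiff_eq_ncard A B
    have := (ncard_pos (s := A \ B)).2 ⟨a, ha⟩
    have := hAB.ncard_inter
    omega
  simp only [Insep, not_forall, not_not] at hA
  obtain ⟨T, hTk, u, huA, v, hvA, huv⟩ := hA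
  obtain ⟨C, D, hCD, hCDT, hu, hv⟩ := huv.exists_isSepn
  have hk : (C ∩ D).ncard = k := by
    rw [hCDT, ncard_coe_finset]
    exact hTk.antisymm (not_lt.1 fun hlt => hG.2 T hlt u v huv)
  have hk' : (D ∩ C).ncard = k := by rwa [inter_comm]
  exact ⟨hAB.isSepn, hAB.proper, hAB.ncard_inter, C, D, hCD, .of_mem hu hv, hk,
    fun x hx => ⟨hAB.sdiff_subset hG hmin hCD.symm hk' hv hvA hu huA hx,
      hAB.sdiff_subset hG hmin hCD hk hu huA hv hvA hx⟩,
    hAB.ncard_inter_le hG hmin hCD hk hu huA hv hvA,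
    hAB.ncard_inter_le hG hmin hCD.symm hk' hv hvA hu huA⟩


lemma not_isBlocklessSep (hG : KConn G k) (hT : ∀ A B, ¬ TShaped G k A B) (A B : Set V) :
    ¬ IsBlocklessSep G k A B := by
  induction hn : A.ncard using Nat.strong_induction_on generalizing A B with
  | _ n ih =>
    intro hAB
    refine hT A B (hAB.tShaped hG fun P Q hPQ => ?_)
    by_contra! hlt
    exact ih _ (hn ▸ hlt) P Q rfl hPQ

lemma exists_isBlockN_of_not_tShaped (hG : KConn G k) (hT : ∀ A B, ¬ TShaped G k A B)
    (hsep : IsSepn G A B) (hprop : ProperSep A B) (hk : (A ∩ B).ncard = k) :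
    ∃ X, IsBlockN G (k + 1) X ∧ X ⊆ A ∧ ¬ X ⊆ A ∩ B := by
  by_contra! hblock
  exact not_isBlocklessSep hG hT A B (isBlocklessSep_of_forall_isBlockN hsep hprop hk hblock)

end Blockless

lemma TShaped.not_isBlockN_subset [Finite V] {G : SimpleGraph V} {k : ℕ} {A B X : Set V}
    (hT : TShaped G k A B) (hX : IsBlockN G (k + 1) X) : ¬ X ⊆ A := fun hXA => by
  obtain ⟨-, -, -, C, D, hCD, -, hk, -, hAC, hAD⟩ := hT
  have hXk : k < X.ncard := hX.1
  rcases hX.insep.subset_or_subset hCD hk.le with hXC | hXD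
  · exact (ncard_le_ncard (subset_inter hXA hXC)).trans hAC |>.not_gt hXk
  · exact (ncard_le_ncard (subset_inter hXA hXD)).trans hAD |>.not_gt hXk

theorem stmt4 [Fintype V] (G : SimpleGraph V) (k : ℕ) (hconn : KConn G k) :
    (∀ A B : Set V, IsSepn G A B → ProperSep A B → (A ∩ B).ncard = k →
        ∃ X Y : Set V, IsBlockN G (k + 1) X ∧ IsBlockN G (k + 1) Y ∧
          X ⊆ A ∧ Y ⊆ B ∧ ¬ X ⊆ A ∩ B ∧ ¬ Y ⊆ A ∩ B)
      ↔ ∀ A B : Set V, ¬ TShaped G k A B := by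
  constructor
  · intro h A B hT
    obtain ⟨X, -, hX, -, hXA, -⟩ := h A B hT.1 hT.2.1 hT.2.2.1
    exact hT.not_isBlockN_subset hX hXA
  · intro hT A B hsep hprop hk
    obtain ⟨X, hX, hXA, hXAB⟩ := exists_isBlockN_of_not_tShaped hconn hT hsep hprop hk
    obtain ⟨Y, hY, hYB, hYBA⟩ := exists_isBlockN_of_not_tShaped hconn hT hsep.symm hprop.symm
      (by rwa [inter_comm])
    exact ⟨X, Y, hX, hY, hXA, hYB, hXAB, by rwa [inter_comm]⟩
end

section
/- Let G be a non-empty graph and λ > 0 a real number such that the average degree d(G) ≥ 2λ, while every non-empty proper subgraph H of G has average degree d(H) < 2λ. Then for every non-empty proper subset S of V(G), the number of edges of G incident with at least one vertex of S is strictly greater than λ|S|. -/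
variable {V : Type*}

/-! Deleting a non-empty proper vertex set `S` removes exactly the edges meeting `S` and leaves the
subgraph induced on `V \ S`. By minimality that subgraph has fewer than `λ |V \ S|` edges, while `G`
has at least `λ |V|`, so more than `λ |S|` edges meet `S`. -/

namespace SimpleGraph

variable {G : SimpleGraph V}

theorem Subgraph.edgeSet_induce_top (s : Set V) :
    ((⊤ : G.Subgraph).induce s).edgeSet = {e ∈ G.edgeSet | ∀ v ∈ e, v ∈ s} := by
  ext e
  induction e using Sym2.ind with
  | _ a b => simp [and_comm, and_assoc]

theorem Subgraph.edgeSet_induce_top_compl (S : Set V) :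
    ((⊤ : G.Subgraph).induce Sᶜ).edgeSet = G.edgeSet \ {e ∈ G.edgeSet | ∃ v ∈ S, v ∈ e} := by
  rw [Subgraph.edgeSet_induce_top]
  ext e
  simp only [Set.mem_sdiff, Set.mem_ofPred_eq, Set.mem_compl_iff]
  grind

theorem Subgraph.ncard_edgeSet_induce_top_compl_add [Finite V] (S : Set V) :
    ((⊤ : G.Subgraph).induce Sᶜ).edgeSet.ncard + {e ∈ G.edgeSet | ∃ v ∈ S, v ∈ e}.ncard =
      G.edgeSet.ncard := by
  rw [Subgraph.edgeSet_induce_top_compl]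
  exact Set.ncard_sdiff_add_ncard_of_subset fun _ he ↦ he.1

theorem Subgraph.induce_top_ne_top {s : Set V} (hs : s ≠ Set.univ) :
    (⊤ : G.Subgraph).induce s ≠ ⊤ := fun h ↦
  hs (congrArg Subgraph.verts h)

end SimpleGraph

open SimpleGraph

theorem stmt9_general [Fintype V] (G : SimpleGraph V) (lam : ℝ)
    (hG : 2 * lam ≤ 2 * (G.edgeSet.ncard : ℝ) / (Fintype.card V : ℝ))
    (hH : ∀ H : G.Subgraph, H.verts.Nonempty → H ≠ ⊤ →
      2 * (H.edgeSet.ncard : ℝ) / (H.verts.ncard : ℝ) < 2 * lam) :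
    ∀ S : Set V, S.Nonempty → S ≠ Set.univ →
      lam * (S.ncard : ℝ) < (({e ∈ G.edgeSet | ∃ v ∈ S, v ∈ e}).ncard : ℝ) := by
  intro S hS hSne
  set H := (⊤ : G.Subgraph).induce Sᶜ
  have hScompl : Sᶜ.Nonempty := Set.nonempty_compl.2 hSne
  have hV : (0 : ℝ) < Fintype.card V := by
    obtain ⟨x, -⟩ := hS; exact_mod_cast Fintype.card_pos_iff.2 ⟨x⟩
  have hHverts : H.verts = Sᶜ := rfl
  have hGedges : lam * Fintype.card V ≤ G.edgeSet.ncard := by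
    rw [le_div_iff₀ hV] at hG; linarith
  have hHedges : (H.edgeSet.ncard : ℝ) < lam * Sᶜ.ncard := by
    have := hH H hScompl (Subgraph.induce_top_ne_top (Set.compl_ne_univ.2 hS))
    rw [hHverts, div_lt_iff₀ (by exact_mod_cast hScompl.ncard_pos)] at this; linarith
  have hsplitV : (S.ncard : ℝ) + Sᶜ.ncard = Fintype.card V := by
    exact_mod_cast (Set.ncard_add_ncard_compl S).trans Nat.card_eq_fintype_card
  have hsplitE : (H.edgeSet.ncard : ℝ) + {e ∈ G.edgeSet | ∃ v ∈ S, v ∈ e}.ncard =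
      G.edgeSet.ncard := by exact_mod_cast Subgraph.ncard_edgeSet_induce_top_compl_add S
  rw [← hsplitV, mul_add] at hGedges
  linarith

theorem stmt9 [Fintype V] [Nonempty V] (G : SimpleGraph V) (lam : ℝ) (hlam : 0 < lam)
    (hG : 2 * lam ≤ 2 * (G.edgeSet.ncard : ℝ) / (Fintype.card V : ℝ))
    (hH : ∀ H : G.Subgraph, H.verts.Nonempty → H ≠ ⊤ →
      2 * (H.edgeSet.ncard : ℝ) / (H.verts.ncard : ℝ) < 2 * lam) :
    ∀ S : Set V, S.Nonempty → S ≠ Set.univ →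
      lam * (S.ncard : ℝ) < (({e ∈ G.edgeSet | ∃ v ∈ S, v ∈ e}).ncard : ℝ) :=
  stmt9_general G lam hG hH
end

section
/- Let G be a graph and X a (≤(k−1))-inseparable set of vertices with |X| > (3/2)(k−1). Then the set θ of all separations (A,B) of G of order less than k with X ⊆ B is a tangle of order k: (θ1) for every separation (A,B) of order < k, either (A,B) ∈ θ or (B,A) ∈ θ; and (θ2) for all (A₁,B₁),(A₂,B₂),(A₃,B₃) ∈ θ, G[A₁] ∪ G[A₂] ∪ G[A₃] ≠ G. -/
variable {V : Type*}

open Finset in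
lemma exists_ncard_setOf_mem_lt_of_sum_ncard_lt {α ι : Type*} [Finite α] [Fintype ι]
    {X : Set α} {S : ι → Set α} {n : ℕ} (h : ∑ i, (S i).ncard < n * X.ncard) :
    ∃ x ∈ X, {i | x ∈ S i}.ncard < n := by
  classical
  by_contra! hX
  simp only [Set.ncard_eq_toFinset_card', Set.toFinset_ofPred] at hX
  have hXfin := X.toFinite
  refine h.not_ge ?_
  calc n * X.ncard = ∑ _x ∈ hXfin.toFinset, n := by
        rw [sum_const, smul_eq_mul, mul_comm, Set.ncard_eq_toFinset_card X hXfin]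
    _ ≤ ∑ x ∈ hXfin.toFinset, #(univ.bipartiteAbove (fun x i => x ∈ S i) x) :=
        sum_le_sum fun x hx => hX x (hXfin.mem_toFinset.1 hx)
    _ = ∑ i, #(hXfin.toFinset.bipartiteBelow (fun x i => x ∈ S i) i) :=
        sum_card_bipartiteAbove_eq_sum_card_bipartiteBelow _
    _ ≤ ∑ i, (S i).ncard := sum_le_sum fun i _ => by
        rw [← Set.ncard_coe_finset, coe_bipartiteBelow]
        exact Set.ncard_le_ncard fun x hx => hx.2

namespace IsSepn

variable {G : SimpleGraph V} {A B : Set V}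

lemma mem_right_of_notMem_left (hsep : IsSepn G A B) {v : V} (hv : v ∉ A) : v ∈ B :=
  (hsep.1 ▸ Set.mem_univ v : v ∈ A ∪ B).resolve_left hv

lemma exists_mem_support_adj_notMem (hsep : IsSepn G A B) {u v : V} (p : G.Walk u v)
    (hu : u ∈ A) (hv : v ∉ A) : ∃ w ∈ p.support, w ∈ A ∩ B ∧ ∃ w', G.Adj w w' ∧ w' ∉ A := by
  induction p with
  | nil => exact absurd hu hv
  | @cons a b c hab p ih =>
    by_cases hb : b ∈ A
    · obtain ⟨w, hw, hwAB, hw'⟩ := ih hb hv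
      exact ⟨w, List.mem_cons_of_mem _ hw, hwAB, hw'⟩
    · have haB : a ∈ B := by
        by_contra haB
        exact hsep.2 a ⟨hu, haB⟩ b ⟨hsep.mem_right_of_notMem_left hb, hb⟩ hab
      exact ⟨a, by simp, ⟨hu, haB⟩, b, hab, hb⟩

lemma sepBy_s12 {S : Set V} (hsep : IsSepn G A B) {u v : V} (hu : u ∈ A) (hv : v ∉ A)
    (huS : u ∉ S) (hvS : v ∉ S) (hS : ∀ w ∈ A ∩ B, ∀ w', G.Adj w w' → w' ∉ A → w ∈ S) :
    SepBy G S u v := by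
  refine ⟨huS, hvS, fun p => ?_⟩
  obtain ⟨w, hw, hwAB, w', hadj, hw'⟩ := hsep.exists_mem_support_adj_notMem p hu hv
  exact ⟨w, hw, hS w hwAB w' hadj hw'⟩

end IsSepn

namespace Insep

variable [Finite V] {G : SimpleGraph V} {m : ℕ} {X A B : Set V}

lemma not_sepBy (hX : Insep G m X) {S : Set V} (hS : S.ncard ≤ m) {u v : V} (hu : u ∈ X)
    (hv : v ∈ X) : ¬ SepBy G S u v := by
  have hSfin := S.toFinite
  simpa using hX hSfin.toFinset (by rwa [← Set.ncard_eq_toFinset_card S hSfin]) u hu v hv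

theorem subset_or_subset_s12 (hX : Insep G m X) (hsep : IsSepn G A B) (hord : (A ∩ B).ncard ≤ m) :
    X ⊆ B ∨ X ⊆ A := by
  by_contra! h
  obtain ⟨⟨u, huX, huB⟩, ⟨v, hvX, hvA⟩⟩ := And.imp Set.not_subset.1 Set.not_subset.1 h
  have huA : u ∈ A := by_contra fun huA => huB (hsep.mem_right_of_notMem_left huA)
  exact hX.not_sepBy hord huX hvX <|
    hsep.sepBy_s12 huA hvA (fun h => huB h.2) (fun h => hvA h.1) fun w hw _ _ _ => hw

/-- Otherwise `(A ∩ B) \ {x}`, of order at most `m`, would separate `x` from the vertices of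
`X` outside `A`. -/
lemma exists_adj_notMem_left (hX : Insep G m X) (hsep : IsSepn G A B)
    (hord : (A ∩ B).ncard ≤ m + 1) (hsmall : (A ∩ B).ncard < X.ncard) (hXB : X ⊆ B)
    {x : V} (hx : x ∈ X) (hxA : x ∈ A) : ∃ v, G.Adj x v ∧ v ∉ A := by
  by_contra! hnbr
  have hxAB : x ∈ A ∩ B := ⟨hxA, hXB hx⟩
  obtain ⟨z, hzX, hzAB⟩ := Set.not_subset.1 fun hsub => (Set.ncard_le_ncard hsub).not_gt hsmall
  have hzA : z ∉ A := fun hzA => hzAB ⟨hzA, hXB hzX⟩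
  have hord' : ((A ∩ B) \ {x}).ncard ≤ m := by
    rw [Set.ncard_sdiff_singleton_of_mem hxAB]
    omega
  refine hX.not_sepBy hord' hx hzX <| hsep.sepBy_s12 hxA hzA (fun h => h.2 rfl)
    (fun h => hzAB h.1) fun w hw w' hadj hw' => ⟨hw, ?_⟩
  rintro rfl
  exact hw' (hnbr w' hadj)

/-- Tangle axiom (θ2). Double counting gives a vertex of `X` in only one separator `A i ∩ B i`;
it lies in no other `A j`, so all its edges must lie in `G[A i]`. -/
theorem not_forall_adj_exists_mem {ι : Type*} [Fintype ι] (hX : Insep G m X)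
    {A B : ι → Set V} (hsep : ∀ i, IsSepn G (A i) (B i)) (hord : ∀ i, (A i ∩ B i).ncard ≤ m + 1)
    (hsmall : ∀ i, (A i ∩ B i).ncard < X.ncard) (hXB : ∀ i, X ⊆ B i)
    (hsum : ∑ i, (A i ∩ B i).ncard < 2 * X.ncard) (hcov : ∀ v, ∃ i, v ∈ A i) :
    ¬ ∀ u v, G.Adj u v → ∃ i, u ∈ A i ∧ v ∈ A i := by
  intro hedge
  obtain ⟨x, hx, hcount⟩ := exists_ncard_setOf_mem_lt_of_sum_ncard_lt hsum
  obtain ⟨i, hxi⟩ := hcov x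
  have huniq : ∀ j, x ∈ A j → j = i := fun j hxj =>
    (Set.ncard_le_one (Set.toFinite _)).1 (Nat.le_of_lt_succ hcount)
      j ⟨hxj, hXB j hx⟩ i ⟨hxi, hXB i hx⟩
  obtain ⟨v, hadj, hv⟩ := hX.exists_adj_notMem_left (hsep i) (hord i) (hsmall i) (hXB i) hx hxi
  obtain ⟨j, hxj, hvj⟩ := hedge x v hadj
  exact hv (huniq j hxj ▸ hvj)

end Insep

theorem stmt12_general [Fintype V] (G : SimpleGraph V) (k : ℕ) (X : Set V)
    (hX : Insep G (k - 1) X) (hcard : 3 * (k - 1) < 2 * X.ncard) :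
    (∀ A B : Set V, IsSepn G A B → (A ∩ B).ncard < k → X ⊆ B ∨ X ⊆ A) ∧
    (∀ A₁ B₁ A₂ B₂ A₃ B₃ : Set V,
      IsSepn G A₁ B₁ → (A₁ ∩ B₁).ncard < k → X ⊆ B₁ →
      IsSepn G A₂ B₂ → (A₂ ∩ B₂).ncard < k → X ⊆ B₂ →
      IsSepn G A₃ B₃ → (A₃ ∩ B₃).ncard < k → X ⊆ B₃ →
      ¬ (Set.univ ⊆ A₁ ∪ A₂ ∪ A₃ ∧
          ∀ u v : V, G.Adj u v →
            (u ∈ A₁ ∧ v ∈ A₁) ∨ (u ∈ A₂ ∧ v ∈ A₂) ∨ (u ∈ A₃ ∧ v ∈ A₃))) := by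
  refine ⟨fun A B hsep hord => hX.subset_or_subset_s12 hsep (by omega), ?_⟩
  intro A₁ B₁ A₂ B₂ A₃ B₃ h₁ o₁ x₁ h₂ o₂ x₂ h₃ o₃ x₃ ⟨hcov, hedge⟩
  have hsep : ∀ i, IsSepn G (![A₁, A₂, A₃] i) (![B₁, B₂, B₃] i) := by
    simp [Fin.forall_fin_succ, h₁, h₂, h₃]
  have hord : ∀ i, (![A₁, A₂, A₃] i ∩ ![B₁, B₂, B₃] i).ncard < k := by
    simp [Fin.forall_fin_succ, o₁, o₂, o₃]
  refine hX.not_forall_adj_exists_mem hsep (fun i => by have := hord i; omega)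
    (fun i => by have := hord i; omega) (by simp [Fin.forall_fin_succ, x₁, x₂, x₃]) ?_
    (fun v => by simpa [Fin.exists_fin_succ, or_assoc] using hcov (Set.mem_univ v))
    (fun u v huv => by simpa [Fin.exists_fin_succ] using hedge u v huv)
  rw [Fin.sum_univ_three]
  exact (by omega : (A₁ ∩ B₁).ncard + (A₂ ∩ B₂).ncard + (A₃ ∩ B₃).ncard < 2 * X.ncard)

theorem stmt12 [Fintype V] (G : SimpleGraph V) (k : ℕ) (hk : 1 ≤ k) (X : Set V)
    (hX : Insep G (k - 1) X) (hcard : 3 * (k - 1) < 2 * X.ncard) :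
    (∀ A B : Set V, IsSepn G A B → (A ∩ B).ncard < k → X ⊆ B ∨ X ⊆ A) ∧
    (∀ A₁ B₁ A₂ B₂ A₃ B₃ : Set V,
      IsSepn G A₁ B₁ → (A₁ ∩ B₁).ncard < k → X ⊆ B₁ →
      IsSepn G A₂ B₂ → (A₂ ∩ B₂).ncard < k → X ⊆ B₂ →
      IsSepn G A₃ B₃ → (A₃ ∩ B₃).ncard < k → X ⊆ B₃ →
      ¬ (Set.univ ⊆ A₁ ∪ A₂ ∪ A₃ ∧
          ∀ u v : V, G.Adj u v →
            (u ∈ A₁ ∧ v ∈ A₁) ∨ (u ∈ A₂ ∧ v ∈ A₂) ∨ (u ∈ A₃ ∧ v ∈ A₃))) :=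
  stmt12_general G k X hX hcard
end

section
/- Let D be a block-decomposition of a graph G of adhesion less than k. Then every k-block of G is contained in some leaf set of D. -/
variable {V : Type*}

/-- A rooted binary branching tree whose branching nodes carry separations and
whose leaves carry vertex sets. -/
inductive BDTree (V : Type u) : Type u
  | leaf (X : Set V) : BDTree V
  | node (A B : Set V) (l r : BDTree V) : BDTree V

/-- `BValid G X t`: `t` is a block-decomposition tree of the part `X` of `G`:
each branching node is labelled by a separation of `G` separating two vertices of the
current set, and the children carry the intersections with the two sides. -/
def BValid (G : SimpleGraph V) : Set V → BDTree V → Prop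
  | X, .leaf Y => Y = X
  | X, .node A B l r =>
      IsSepn G A B ∧ (∃ u ∈ X, ∃ v ∈ X, u ∈ A \ B ∧ v ∈ B \ A) ∧
        BValid G (X ∩ A) l ∧ BValid G (X ∩ B) r

/-- The leaf sets of a block-decomposition tree. -/
def BLeaves : BDTree V → Set (Set V)
  | .leaf Y => {Y}
  | .node _ _ l r => BLeaves l ∪ BLeaves r

/-- The decomposition has adhesion less than `k`. -/
def BAdhLT (k : ℕ) : BDTree V → Prop
  | .leaf _ => True
  | .node A B l r => (A ∩ B).ncard < k ∧ BAdhLT k l ∧ BAdhLT k r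


/-!
Each separation `(A, B)` of a labelling node has fewer than `k` vertices in `A ∩ B`, and `A ∩ B`
separates every vertex of `A \ B` from every vertex of `B \ A`. A `k`-block cannot be separated by
fewer than `k` vertices, so it lies entirely in `A` or entirely in `B`, hence in the set of one of
the two children. Descending the tree in this way ends at a leaf set containing the block.
-/

variable {G : SimpleGraph V}

namespace IsSepn

variable {A B : Set V}

lemma mem_inter_of_adj (hsep : IsSepn G A B) {a b : V} (ha : a ∈ A \ B) (hb : b ∉ A \ B)
    (hab : G.Adj a b) : b ∈ A ∩ B := by
  have hbAB : b ∈ A ∪ B := hsep.1 ▸ Set.mem_univ b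
  have hbA : b ∈ A := by
    by_contra hbA
    exact hsep.2 a ha b ⟨hbAB.resolve_left hbA, hbA⟩ hab
  exact ⟨hbA, by simpa [hbA] using hb⟩

lemma exists_mem_support_inter (hsep : IsSepn G A B) {u v : V} (p : G.Walk u v)
    (hu : u ∈ A \ B) (hv : v ∉ A \ B) : ∃ w ∈ p.support, w ∈ A ∩ B := by
  obtain ⟨d, hd, hfst, hsnd⟩ := p.exists_boundary_dart (A \ B) hu hv
  exact ⟨d.snd, p.dart_snd_mem_support_of_mem_darts hd, hsep.mem_inter_of_adj hfst hsnd d.adj⟩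

lemma sepBy_inter (hsep : IsSepn G A B) {u v : V} (hu : u ∈ A \ B) (hv : v ∈ B \ A) :
    SepBy G (A ∩ B) u v :=
  ⟨fun h => hu.2 h.2, fun h => hv.2 h.1,
    fun p => hsep.exists_mem_support_inter p hu fun h => hv.2 h.1⟩

end IsSepn

lemma Insep.subset_or_subset_of_isSepn {m : ℕ} {X A B : Set V} (hX : Insep G m X)
    (hsep : IsSepn G A B) (hfin : (A ∩ B).Finite) (hcard : (A ∩ B).ncard ≤ m) :
    X ⊆ A ∨ X ⊆ B := by
  by_contra! h
  obtain ⟨u, huX, huA⟩ := Set.not_subset.mp h.1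
  obtain ⟨v, hvX, hvB⟩ := Set.not_subset.mp h.2
  have hu : u ∈ B \ A := ⟨(hsep.1 ▸ Set.mem_univ u : u ∈ A ∪ B).resolve_left huA, huA⟩
  have hv : v ∈ A \ B := ⟨(hsep.1 ▸ Set.mem_univ v : v ∈ A ∪ B).resolve_right hvB, hvB⟩
  refine hX hfin.toFinset ?_ v hvX u huX ?_
  · rwa [← Set.ncard_eq_toFinset_card _ hfin]
  · simpa using hsep.sepBy_inter hv hu

lemma Insep.exists_mem_bLeaves_subset [Finite V] {k : ℕ} {X Y : Set V} (hX : Insep G (k - 1) X)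
    {t : BDTree V} (hval : BValid G Y t) (hadh : BAdhLT k t) (hXY : X ⊆ Y) :
    ∃ L ∈ BLeaves t, X ⊆ L := by
  induction t generalizing Y with
  | leaf L => exact ⟨L, rfl, hval ▸ hXY⟩
  | node A B l r ihl ihr =>
    obtain ⟨hsep, -, hvl, hvr⟩ := hval
    obtain ⟨hlt, hal, har⟩ := hadh
    rcases hX.subset_or_subset_of_isSepn hsep (Set.toFinite _) (by omega) with hXA | hXB
    · obtain ⟨L, hL, hXL⟩ := ihl hvl hal (Set.subset_inter hXY hXA)
      exact ⟨L, Or.inl hL, hXL⟩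
    · obtain ⟨L, hL, hXL⟩ := ihr hvr har (Set.subset_inter hXY hXB)
      exact ⟨L, Or.inr hL, hXL⟩

theorem stmt17 [Fintype V] (G : SimpleGraph V) (k : ℕ) (t : BDTree V)
    (hval : BValid G Set.univ t) (hadh : BAdhLT k t)
    (B : Set V) (hB : IsBlockN G k B) :
    ∃ L ∈ BLeaves t, B ⊆ L :=
  hB.2.1.exists_mem_bLeaves_subset hval hadh (Set.subset_univ B)
end
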